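/- arXiv:2503.12356 — 2 statements merged into one kernel-verified Lean document; each statement's English description precedes it below -/
import Mathlib

section
/- Let (Ω, ℙ) be a probability space, X : Ω → ℝ^D a square-integrable random vector with mean μ^tar = E[X], and suppose Cov(X) = V · diag(s) · Vᵀ where V ∈ ℝ^{D×D} is an orthogonal matrix and s ∈ ℝ^D has nonnegative entries. Let T ⊆ {1,…,D} with |T| = r₂ be a set of indices with s_i > 0 for every i ∈ T, let V̂ ∈ ℝ^{D×r₂} be the submatrix of V formed by the columns indexed by T, and set Z = V̂V̂ᵀ(X − μ^tar) + μ^tar. Let V̂^map ∈ ℝ^{D×r₁} be a matrix with orthonormal columns, P^map = V̂^map(V̂^map)ᵀ, μ^map ∈ ℝ^D, and η ∈ ℝ. Define P* = η·P^map·(I − V̂V̂ᵀ) and b* = η·μ^map − P*·μ^tar. Then Cov(P*X, Z) = 0, and for every matrix P ∈ ℝ^{D×D} and vector b ∈ ℝ^D satisfying Cov(PX, Z) = 0, one has E[‖P*X + b* − η(P^map(X − μ^tar) + μ^map)‖₂²] ≤ E[‖PX + b − η(P^map(X − μ^tar) + μ^map)‖₂²]. -/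
open MeasureTheory Matrix

/-- Componentwise mean of a random vector. -/
noncomputable def vecMean {Ω : Type*} [MeasureSpace Ω] {D : ℕ} (X : Ω → Fin D → ℝ) :
    Fin D → ℝ := fun i => ∫ ω, X ω i

/-- Cross-covariance matrix `Cov(Y,Z)ᵢⱼ = E[(Yᵢ − E[Yᵢ])(Zⱼ − E[Zⱼ])]`. -/
noncomputable def crossCov {Ω : Type*} [MeasureSpace Ω] {m n : ℕ}
    (Y : Ω → Fin m → ℝ) (Z : Ω → Fin n → ℝ) : Matrix (Fin m) (Fin n) ℝ :=
  Matrix.of fun i j => ∫ ω, (Y ω i - vecMean Y i) * (Z ω j - vecMean Z j)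

/-!
With `C = Cov(X)` and the projection `Π = V̂V̂ᵀ`, the vector `Z` is an affine image of `X`, so
`Cov(PX, Z) = P C Π`, and the objective of `(P, b)` equals `tr(A C Aᵀ) + ‖c‖²` with
`A = P − η P^map` and a constant vector `c` that vanishes at `(P*, b*)`. The columns of `V̂` are
eigenvectors of `C`, hence `(1 − Π) C V̂ = 0`, which gives `Cov(P*X, Z) = 0`. For a feasible `P`
write `A = A* + (P − P*)` with `A* = −η P^map Π`: the two constraints make the cross term
`(P − P*) C A*ᵀ = −η (P − P*) C Π P^mapᵀ` vanish, so
`tr(A C Aᵀ) = tr(A* C A*ᵀ) + tr((P − P*) C (P − P*)ᵀ) ≥ tr(A* C A*ᵀ)`.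
-/

lemma memLp_mulVec_apply {Ω : Type*} [MeasurableSpace Ω] {μ : Measure Ω} {D m : ℕ}
    {p : ENNReal} {Y : Ω → Fin D → ℝ} (hY : ∀ k, MemLp (fun ω => Y ω k) p μ)
    (M : Matrix (Fin m) (Fin D) ℝ) (i : Fin m) : MemLp (fun ω => (M *ᵥ Y ω) i) p μ := by
  simpa only [mulVec, dotProduct] using memLp_finsetSum _ fun k _ => (hY k).const_mul (M i k)

lemma integral_sum_sq_add_of_integral_eq_zero {Ω : Type*} [MeasurableSpace Ω] {μ : Measure Ω}
    [IsProbabilityMeasure μ] {m : ℕ} {u : Ω → Fin m → ℝ} (hu : ∀ i, MemLp (fun ω => u ω i) 2 μ)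
    (hu0 : ∀ i, ∫ ω, u ω i ∂μ = 0) (c : Fin m → ℝ) :
    ∫ ω, ∑ i, (u ω + c) i ^ 2 ∂μ = ∑ i, ∫ ω, u ω i * u ω i ∂μ + c ⬝ᵥ c := by
  have hu1 (i : Fin m) : Integrable (fun ω => u ω i) μ := (hu i).integrable one_le_two
  have huu (i : Fin m) : Integrable (fun ω => u ω i * u ω i) μ := (hu i).integrable_mul (hu i)
  have hrest (i : Fin m) : Integrable (fun ω => 2 * c i * u ω i + c i ^ 2) μ :=
    ((hu1 i).const_mul _).add (integrable_const _)
  have hsum (i : Fin m) :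
      Integrable (fun ω => u ω i * u ω i + (2 * c i * u ω i + c i ^ 2)) μ :=
    (huu i).add (hrest i)
  have hsq (ω : Ω) (i : Fin m) :
      (u ω + c) i ^ 2 = u ω i * u ω i + (2 * c i * u ω i + c i ^ 2) := by
    simp only [Pi.add_apply]; ring
  simp_rw [hsq, integral_finsetSum _ fun i _ => hsum i,
    integral_add (huu _) (hrest _), integral_add ((hu1 _).const_mul _) (integrable_const _),
    integral_const_mul, hu0]
  simp [dotProduct, Finset.sum_add_distrib, sq]

lemma crossCov_transpose {Ω : Type*} [MeasureSpace Ω] {m n : ℕ} (Y : Ω → Fin m → ℝ)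
    (Z : Ω → Fin n → ℝ) : (crossCov Y Z)ᵀ = crossCov Z Y := by
  ext i j
  simp only [crossCov, transpose_apply, of_apply, mul_comm]

section Moments
variable {Ω : Type*} [MeasureSpace Ω] {D : ℕ}

lemma integral_mulVec_mul_mulVec {m n : ℕ} {Y : Ω → Fin D → ℝ}
    (hY : ∀ k, MemLp (fun ω => Y ω k) 2 volume)
    (M : Matrix (Fin m) (Fin D) ℝ) (N : Matrix (Fin n) (Fin D) ℝ) (i : Fin m) (j : Fin n) :
    ∫ ω, (M *ᵥ Y ω) i * (N *ᵥ Y ω) j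
      = (M * Matrix.of (fun k l => ∫ ω, Y ω k * Y ω l) * Nᵀ) i j := by
  have hint (k l : Fin D) : Integrable (fun ω => M i k * N j l * (Y ω k * Y ω l)) volume :=
    ((hY k).integrable_mul (hY l)).const_mul _
  calc ∫ ω, (M *ᵥ Y ω) i * (N *ᵥ Y ω) j
      = ∫ ω, ∑ k, ∑ l, M i k * N j l * (Y ω k * Y ω l) := by
        congr 1 with ω
        simp only [mulVec, dotProduct, Finset.sum_mul_sum]
        exact Finset.sum_congr rfl fun k _ => Finset.sum_congr rfl fun l _ => by ring
    _ = ∑ k, ∑ l, M i k * N j l * ∫ ω, Y ω k * Y ω l := by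
        simp_rw [integral_finsetSum _ fun k _ => integrable_finsetSum _ fun l _ => hint k l,
          integral_finsetSum _ fun l _ => hint _ l, integral_const_mul]
    _ = _ := by
        simp only [mul_apply, transpose_apply, of_apply, Finset.sum_mul]
        rw [Finset.sum_comm]
        exact Finset.sum_congr rfl fun k _ => Finset.sum_congr rfl fun l _ => by ring

variable [IsProbabilityMeasure (volume : Measure Ω)] {X : Ω → Fin D → ℝ}

lemma vecMean_mulVec_add (hX : ∀ k, Integrable (fun ω => X ω k) volume) {m : ℕ}
    (M : Matrix (Fin m) (Fin D) ℝ) (a : Fin m → ℝ) :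
    vecMean (fun ω => M *ᵥ X ω + a) = M *ᵥ vecMean X + a := by
  ext i
  have hint (k : Fin D) : Integrable (fun ω => M i k * X ω k) volume := (hX k).const_mul _
  simp only [vecMean, Pi.add_apply, mulVec, dotProduct]
  rw [integral_add (integrable_finsetSum _ fun k _ => hint k) (integrable_const _),
    integral_finsetSum _ fun k _ => hint k, integral_const]
  simp [integral_const_mul]

lemma mulVec_add_sub_vecMean (hX : ∀ k, Integrable (fun ω => X ω k) volume) {m : ℕ}
    (M : Matrix (Fin m) (Fin D) ℝ) (a : Fin m → ℝ) (ω : Ω) :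
    M *ᵥ X ω + a - vecMean (fun ω => M *ᵥ X ω + a) = M *ᵥ (X ω - vecMean X) := by
  rw [vecMean_mulVec_add hX, mulVec_sub]
  abel

lemma integral_mulVec_sub_vecMean (hX : ∀ k, Integrable (fun ω => X ω k) volume) {m : ℕ}
    (A : Matrix (Fin m) (Fin D) ℝ) (i : Fin m) : ∫ ω, (A *ᵥ (X ω - vecMean X)) i = 0 := by
  have h := congrFun (vecMean_mulVec_add hX A (-(A *ᵥ vecMean X))) i
  rw [add_neg_cancel] at h
  simpa only [vecMean, mulVec_sub, ← sub_eq_add_neg, Pi.zero_apply] using h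

lemma memLp_sub_vecMean (hX : ∀ k, MemLp (fun ω => X ω k) 2 volume) (k : Fin D) :
    MemLp (fun ω => (X ω - vecMean X) k) 2 volume :=
  (hX k).sub (memLp_const _)

lemma crossCov_mulVec_add (hX : ∀ k, MemLp (fun ω => X ω k) 2 volume) {m n : ℕ}
    (M : Matrix (Fin m) (Fin D) ℝ) (a : Fin m → ℝ) (N : Matrix (Fin n) (Fin D) ℝ)
    (c : Fin n → ℝ) :
    crossCov (fun ω => M *ᵥ X ω + a) (fun ω => N *ᵥ X ω + c) = M * crossCov X X * Nᵀ := by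
  have hX1 (k : Fin D) := (hX k).integrable one_le_two
  ext i j
  simp_rw [crossCov, of_apply, ← Pi.sub_apply, mulVec_add_sub_vecMean hX1]
  exact integral_mulVec_mul_mulVec (memLp_sub_vecMean hX) M N i j

lemma crossCov_mulVec_of_eq_mulVec_sub_add (hX : ∀ k, MemLp (fun ω => X ω k) 2 volume)
    {m n : ℕ} {Z : Ω → Fin n → ℝ} {N : Matrix (Fin n) (Fin D) ℝ} {a : Fin D → ℝ}
    {c : Fin n → ℝ} (hZ : ∀ ω, Z ω = N *ᵥ (X ω - a) + c) (M : Matrix (Fin m) (Fin D) ℝ) :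
    crossCov (fun ω => M *ᵥ X ω) Z = M * crossCov X X * Nᵀ := by
  have hZ' : Z = fun ω => N *ᵥ X ω + (c - N *ᵥ a) := by
    ext1 ω; rw [hZ, mulVec_sub]; abel
  simpa [hZ'] using crossCov_mulVec_add hX M 0 N _

lemma integral_sum_sq_mulVec_sub_vecMean_add (hX : ∀ k, MemLp (fun ω => X ω k) 2 volume)
    {m : ℕ} (A : Matrix (Fin m) (Fin D) ℝ) (c : Fin m → ℝ) :
    ∫ ω, ∑ i, (A *ᵥ (X ω - vecMean X) + c) i ^ 2 = (A * crossCov X X * Aᵀ).trace + c ⬝ᵥ c := by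
  rw [integral_sum_sq_add_of_integral_eq_zero (memLp_mulVec_apply (memLp_sub_vecMean hX) A)
    (integral_mulVec_sub_vecMean (fun k => (hX k).integrable one_le_two) A)]
  simp_rw [integral_mulVec_mul_mulVec (memLp_sub_vecMean hX)]
  rfl

lemma integral_sum_sq_mulVec_add_sub (hX : ∀ k, MemLp (fun ω => X ω k) 2 volume) {m : ℕ}
    (Q A : Matrix (Fin m) (Fin D) ℝ) (c d : Fin m → ℝ) :
    ∫ ω, ∑ i, (Q *ᵥ X ω + c - (A *ᵥ (X ω - vecMean X) + d)) i ^ 2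
      = ((Q - A) * crossCov X X * (Q - A)ᵀ).trace
        + (Q *ᵥ vecMean X + c - d) ⬝ᵥ (Q *ᵥ vecMean X + c - d) := by
  have hres (ω : Ω) : Q *ᵥ X ω + c - (A *ᵥ (X ω - vecMean X) + d)
      = (Q - A) *ᵥ (X ω - vecMean X) + (Q *ᵥ vecMean X + c - d) := by
    simp only [sub_mulVec, mulVec_sub]
    abel
  simp_rw [hres]
  exact integral_sum_sq_mulVec_sub_vecMean_add hX _ _

lemma trace_mul_crossCov_mul_transpose_nonneg (hX : ∀ k, MemLp (fun ω => X ω k) 2 volume)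
    {m : ℕ} (A : Matrix (Fin m) (Fin D) ℝ) : 0 ≤ (A * crossCov X X * Aᵀ).trace := by
  simpa using (integral_sum_sq_mulVec_sub_vecMean_add hX A 0).symm.trans_ge
    (integral_nonneg fun ω => Finset.sum_nonneg fun i _ => sq_nonneg _)

end Moments

namespace Matrix
variable {m n R : Type*} [Fintype n] [CommRing R]

lemma transpose_submatrix_mul_submatrix_of_injective [DecidableEq m] [DecidableEq n]
    {V : Matrix n n R} (hV : Vᵀ * V = 1) {f : m → n} (hf : f.Injective) :
    (V.submatrix id f)ᵀ * V.submatrix id f = 1 := by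
  rw [show (V.submatrix id f)ᵀ * V.submatrix id f = (Vᵀ * V).submatrix f f by ext; rfl, hV,
    submatrix_one f hf]

lemma mul_eq_of_eq_mul_diagonal_mul_transpose [DecidableEq n] {C V : Matrix n n R}
    {s : n → R} (hV : Vᵀ * V = 1) (hC : C = V * diagonal s * Vᵀ) : C * V = V * diagonal s := by
  rw [hC, Matrix.mul_assoc, hV, Matrix.mul_one]

lemma mul_submatrix_id_of_mul_eq [Fintype m] [DecidableEq m] [DecidableEq n]
    {C V : Matrix n n R} {s : n → R} (h : C * V = V * diagonal s) (f : m → n) :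
    C * V.submatrix id f = V.submatrix id f * diagonal (s ∘ f) := by
  calc C * V.submatrix id f = (C * V).submatrix id f := by ext; rfl
    _ = V.submatrix id f * diagonal (s ∘ f) := by
      rw [h]; ext i k; simp [mul_diagonal]

lemma one_sub_mul_transpose_mul_mul_eq_zero [Fintype m] [DecidableEq m] [DecidableEq n]
    {W : Matrix n m R} {C : Matrix n n R} {E : Matrix m m R} (hW : Wᵀ * W = 1)
    (hC : C * W = W * E) : (1 - W * Wᵀ) * C * W = 0 := by
  rw [Matrix.mul_assoc, hC, Matrix.sub_mul, Matrix.one_mul, Matrix.mul_assoc,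
    ← Matrix.mul_assoc Wᵀ, hW, Matrix.one_mul, sub_self]

lemma trace_add_mul_mul_transpose_add [Fintype m] {A B : Matrix m n R} {C : Matrix n n R}
    (hC : Cᵀ = C) (hBA : B * C * Aᵀ = 0) :
    ((A + B) * C * (A + B)ᵀ).trace = (A * C * Aᵀ).trace + (B * C * Bᵀ).trace := by
  have hAB : (A * C * Bᵀ).trace = 0 := by
    rw [← trace_transpose, transpose_mul, transpose_mul, transpose_transpose, hC,
      ← Matrix.mul_assoc, hBA, trace_zero]
  simp only [transpose_add, Matrix.add_mul, Matrix.mul_add, trace_add, hAB, hBA, trace_zero]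
  ring

end Matrix

lemma trace_mul_crossCov_mul_transpose_le {Ω : Type*} [MeasureSpace Ω]
    [IsProbabilityMeasure (volume : Measure Ω)] {D m : ℕ} {X : Ω → Fin D → ℝ}
    (hX : ∀ k, MemLp (fun ω => X ω k) 2 volume) {A B : Matrix (Fin m) (Fin D) ℝ}
    (hBA : B * crossCov X X * Aᵀ = 0) :
    (A * crossCov X X * Aᵀ).trace ≤ ((A + B) * crossCov X X * (A + B)ᵀ).trace := by
  rw [trace_add_mul_mul_transpose_add (crossCov_transpose X X) hBA]
  linarith [trace_mul_crossCov_mul_transpose_nonneg hX B]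

theorem gloce_closed_form_optimal_general
    {Ω : Type*} [MeasureSpace Ω] [IsProbabilityMeasure (volume : Measure Ω)]
    {D r₂ : ℕ}
    (X : Ω → Fin D → ℝ)
    (hX : ∀ i, MemLp (fun ω => X ω i) 2 volume)
    (μtar : Fin D → ℝ) (hμtar : μtar = vecMean X)
    (V : Matrix (Fin D) (Fin D) ℝ) (hV : Vᵀ * V = 1)
    (s : Fin D → ℝ)
    (hCovX : crossCov X X = V * Matrix.diagonal s * Vᵀ)
    (f : Fin r₂ → Fin D) (hf : Function.Injective f)
    (Vhat : Matrix (Fin D) (Fin r₂) ℝ) (hVhat : Vhat = V.submatrix id f)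
    (Z : Ω → Fin D → ℝ)
    (hZ : ∀ ω, Z ω = (Vhat * Vhatᵀ).mulVec (X ω - μtar) + μtar)
    (Pmap : Matrix (Fin D) (Fin D) ℝ)
    (μmap : Fin D → ℝ) (η : ℝ)
    (Pstar : Matrix (Fin D) (Fin D) ℝ)
    (hPstar : Pstar = η • (Pmap * (1 - Vhat * Vhatᵀ)))
    (bstar : Fin D → ℝ) (hbstar : bstar = η • μmap - Pstar.mulVec μtar) :
    crossCov (fun ω => Pstar.mulVec (X ω)) Z = 0 ∧
    ∀ (P : Matrix (Fin D) (Fin D) ℝ) (b : Fin D → ℝ),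
      crossCov (fun ω => P.mulVec (X ω)) Z = 0 →
      (∫ ω, ∑ i, (Pstar.mulVec (X ω) + bstar
            - η • (Pmap.mulVec (X ω - μtar) + μmap)) i ^ 2)
        ≤ ∫ ω, ∑ i, (P.mulVec (X ω) + b
            - η • (Pmap.mulVec (X ω - μtar) + μmap)) i ^ 2 := by
  subst hμtar
  set C := crossCov X X
  set Proj := Vhat * Vhatᵀ
  have hcov (M : Matrix (Fin D) (Fin D) ℝ) : crossCov (fun ω => M *ᵥ X ω) Z = M * C * Projᵀ :=
    crossCov_mulVec_of_eq_mulVec_sub_add hX hZ M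
  have hProjC : (1 - Proj) * C * Vhat = 0 := by
    subst hVhat
    exact one_sub_mul_transpose_mul_mul_eq_zero
      (transpose_submatrix_mul_submatrix_of_injective hV hf)
      (mul_submatrix_id_of_mul_eq (mul_eq_of_eq_mul_diagonal_mul_transpose hV hCovX) f)
  have hPstar_cov : crossCov (fun ω => Pstar *ᵥ X ω) Z = 0 := by
    have : Pstar * C * Projᵀ = η • (Pmap * ((1 - Proj) * C * Vhat) * Vhatᵀ) := by
      simp only [hPstar, Proj, transpose_mul, transpose_transpose, smul_mul, Matrix.mul_assoc]
    rw [hcov, this, hProjC, Matrix.mul_zero, Matrix.zero_mul, smul_zero]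
  refine ⟨hPstar_cov, fun P b hP => ?_⟩
  have horth : (P - Pstar) * C * (Pstar - η • Pmap)ᵀ = 0 := by
    have hdiff : (P - Pstar) * C * Projᵀ = 0 := by
      rw [sub_mul, sub_mul, ← hcov, ← hcov, hP, hPstar_cov, sub_zero]
    have hPstar' : Pstar - η • Pmap = -(η • (Pmap * Proj)) := by
      rw [hPstar, Matrix.mul_sub, Matrix.mul_one, smul_sub]; abel
    rw [hPstar', transpose_neg, transpose_smul, transpose_mul, Matrix.mul_neg, Matrix.mul_smul,
      ← Matrix.mul_assoc, hdiff, Matrix.zero_mul, smul_zero, neg_zero]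
  have hbias : Pstar *ᵥ vecMean X + bstar - η • μmap = 0 := by rw [hbstar]; abel
  simp_rw [smul_add, ← smul_mulVec, integral_sum_sq_mulVec_add_sub hX, hbias, zero_dotProduct,
    add_zero, show P - η • Pmap = (Pstar - η • Pmap) + (P - Pstar) by abel]
  exact le_add_of_le_of_nonneg (trace_mul_crossCov_mul_transpose_le hX horth)
    (Finset.sum_nonneg fun i _ => mul_self_nonneg _)

/-- The projection `P* = η·P^map·(I − V̂V̂ᵀ)` with bias
`b* = η·μ^map − P*·μ^tar` satisfies the guardedness constraint `Cov(P*X, Z) = 0`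
and minimizes the mean-squared objective among all `(P, b)` satisfying the constraint. -/
theorem gloce_closed_form_optimal
    {Ω : Type*} [MeasureSpace Ω] [IsProbabilityMeasure (volume : Measure Ω)]
    {D r₁ r₂ : ℕ}
    (X : Ω → Fin D → ℝ)
    (hX : ∀ i, MemLp (fun ω => X ω i) 2 volume)
    (μtar : Fin D → ℝ) (hμtar : μtar = vecMean X)
    (V : Matrix (Fin D) (Fin D) ℝ) (hV : Vᵀ * V = 1)
    (s : Fin D → ℝ) (hs : ∀ i, 0 ≤ s i)
    (hCovX : crossCov X X = V * Matrix.diagonal s * Vᵀ)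
    (f : Fin r₂ → Fin D) (hf : Function.Injective f)
    (hfs : ∀ k, 0 < s (f k))
    (Vhat : Matrix (Fin D) (Fin r₂) ℝ) (hVhat : Vhat = V.submatrix id f)
    (Z : Ω → Fin D → ℝ)
    (hZ : ∀ ω, Z ω = (Vhat * Vhatᵀ).mulVec (X ω - μtar) + μtar)
    (Vmap : Matrix (Fin D) (Fin r₁) ℝ) (hVmap : Vmapᵀ * Vmap = 1)
    (Pmap : Matrix (Fin D) (Fin D) ℝ) (hPmap : Pmap = Vmap * Vmapᵀ)
    (μmap : Fin D → ℝ) (η : ℝ)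
    (Pstar : Matrix (Fin D) (Fin D) ℝ)
    (hPstar : Pstar = η • (Pmap * (1 - Vhat * Vhatᵀ)))
    (bstar : Fin D → ℝ) (hbstar : bstar = η • μmap - Pstar.mulVec μtar) :
    crossCov (fun ω => Pstar.mulVec (X ω)) Z = 0 ∧
    ∀ (P : Matrix (Fin D) (Fin D) ℝ) (b : Fin D → ℝ),
      crossCov (fun ω => P.mulVec (X ω)) Z = 0 →
      (∫ ω, ∑ i, (Pstar.mulVec (X ω) + bstar
            - η • (Pmap.mulVec (X ω - μtar) + μmap)) i ^ 2)
        ≤ ∫ ω, ∑ i, (P.mulVec (X ω) + b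
            - η • (Pmap.mulVec (X ω - μtar) + μmap)) i ^ 2 :=
  gloce_closed_form_optimal_general X hX μtar hμtar V hV s hCovX f hf Vhat hVhat Z hZ Pmap μmap η
    Pstar hPstar bstar hbstar
end

section
/- Let V ∈ ℝ^{D×D} be an orthogonal matrix, s ∈ ℝ^D a vector with nonnegative entries, and Σ = V · diag(s) · Vᵀ. Let T ⊆ {1,…,D} with |T| = r, and let V̂ ∈ ℝ^{D×r} be the submatrix of V formed by the columns indexed by T. Let M ∈ ℝ^{D×D} be any matrix and define P* = M·(I − V̂V̂ᵀ). Then P*·Σ·V̂V̂ᵀ = 0, and for every matrix P ∈ ℝ^{D×D} satisfying P·Σ·V̂V̂ᵀ = 0 one has trace((P* − M)·Σ·(P* − M)ᵀ) ≤ trace((P − M)·Σ·(P − M)ᵀ). -/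
open Matrix

/-- Conjugation of a PSD diagonal form has nonnegative trace. -/
lemma trace_conj_diag_nonneg {D : ℕ}
    (V : Matrix (Fin D) (Fin D) ℝ) (s : Fin D → ℝ) (hs : ∀ i, 0 ≤ s i)
    (A : Matrix (Fin D) (Fin D) ℝ) :
    0 ≤ Matrix.trace (A * (V * Matrix.diagonal s * Vᵀ) * Aᵀ) := by
  have h : A * (V * Matrix.diagonal s * Vᵀ) * Aᵀ
      = (A * V) * Matrix.diagonal s * (A * V)ᵀ := by
    simp only [Matrix.transpose_mul, Matrix.mul_assoc]
  rw [h]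
  set C := A * V with hC
  rw [Matrix.trace]
  apply Finset.sum_nonneg
  intro j _
  have hdiag : (C * Matrix.diagonal s * Cᵀ).diag j = ∑ i, s i * (C j i) ^ 2 := by
    show (C * Matrix.diagonal s * Cᵀ) j j = _
    rw [Matrix.mul_apply]
    apply Finset.sum_congr rfl
    intro i _
    rw [Matrix.mul_diagonal, Matrix.transpose_apply]
    ring
  rw [hdiag]
  apply Finset.sum_nonneg
  intro i _
  have := hs i
  positivity

/-- For `Σ = V·diag(s)·Vᵀ` with `V` orthogonal and `s ≥ 0`,
`V̂` a column submatrix of `V`, and any `M`, the matrix `P* = M·(I − V̂V̂ᵀ)`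
satisfies `P*·Σ·V̂V̂ᵀ = 0` and minimizes `trace((P − M)·Σ·(P − M)ᵀ)` among all
`P` with `P·Σ·V̂V̂ᵀ = 0`. -/
theorem trace_optimal_projection
    {D r : ℕ}
    (V : Matrix (Fin D) (Fin D) ℝ) (hV : Vᵀ * V = 1)
    (s : Fin D → ℝ) (hs : ∀ i, 0 ≤ s i)
    (Sig : Matrix (Fin D) (Fin D) ℝ) (hSig : Sig = V * Matrix.diagonal s * Vᵀ)
    (f : Fin r → Fin D) (hf : Function.Injective f)
    (Vhat : Matrix (Fin D) (Fin r) ℝ) (hVhat : Vhat = V.submatrix id f)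
    (M : Matrix (Fin D) (Fin D) ℝ)
    (Pstar : Matrix (Fin D) (Fin D) ℝ)
    (hPstar : Pstar = M * (1 - Vhat * Vhatᵀ)) :
    Pstar * Sig * (Vhat * Vhatᵀ) = 0 ∧
    ∀ P : Matrix (Fin D) (Fin D) ℝ, P * Sig * (Vhat * Vhatᵀ) = 0 →
      Matrix.trace ((Pstar - M) * Sig * (Pstar - M)ᵀ)
        ≤ Matrix.trace ((P - M) * Sig * (P - M)ᵀ) := by
  -- the indicator function of the image of `f`
  set e : Fin D → ℝ := fun i => if ∃ j, f j = i then 1 else 0 with he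
  set E : Matrix (Fin D) (Fin D) ℝ := Matrix.diagonal e with hE
  set ds : Matrix (Fin D) (Fin D) ℝ := Matrix.diagonal s with hds
  -- `V̂ V̂ᵀ = V E Vᵀ`
  have hQ : Vhat * Vhatᵀ = V * E * Vᵀ := by
    ext a b
    have hL : (Vhat * Vhatᵀ) a b = ∑ j, V a (f j) * V b (f j) := by
      simp [hVhat, Matrix.mul_apply]
    have hR : (V * E * Vᵀ) a b = ∑ i, (if ∃ j, f j = i then V a i * V b i else 0) := by
      rw [Matrix.mul_apply]
      apply Finset.sum_congr rfl
      intro i _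
      rw [hE, Matrix.mul_diagonal, Matrix.transpose_apply]
      by_cases h : ∃ j, f j = i <;> simp [he, h]
    rw [hL, hR, ← Finset.sum_filter]
    have hfilter : Finset.univ.filter (fun i => ∃ j, f j = i)
        = Finset.univ.image f := by
      ext i
      simp [eq_comm]
    rw [hfilter, Finset.sum_image (fun x _ y _ h => hf h)]
  have hVVt : V * Vᵀ = 1 := mul_eq_one_comm.mp hV
  have cancel : ∀ X : Matrix (Fin D) (Fin D) ℝ, Vᵀ * (V * X) = X := by
    intro X
    rw [← Matrix.mul_assoc, hV, Matrix.one_mul]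
  have hee : (fun i => e i * e i) = e := by
    funext i
    rw [he]
    by_cases h : ∃ j, f j = i <;> simp [h]
  have hEE : E * E = E := by
    rw [hE, Matrix.diagonal_mul_diagonal]
    exact congrArg Matrix.diagonal hee
  have hEs : E * ds = ds * E := by
    rw [hE, hds, Matrix.diagonal_mul_diagonal, Matrix.diagonal_mul_diagonal]
    exact congrArg Matrix.diagonal (funext fun i => mul_comm _ _)
  have hEdsE : E * (ds * (E * Vᵀ)) = ds * (E * Vᵀ) := by
    calc E * (ds * (E * Vᵀ)) = (E * ds) * (E * Vᵀ) := by rw [Matrix.mul_assoc]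
      _ = ds * (E * (E * Vᵀ)) := by rw [hEs, Matrix.mul_assoc]
      _ = ds * ((E * E) * Vᵀ) := by rw [Matrix.mul_assoc]
      _ = ds * (E * Vᵀ) := by rw [hEE]
  have hSQ : Sig * (V * (E * Vᵀ)) = V * (ds * (E * Vᵀ)) := by
    rw [hSig]
    simp only [Matrix.mul_assoc]
    rw [cancel]
  have hQSQ : V * (E * Vᵀ) * (V * (ds * (E * Vᵀ))) = V * (ds * (E * Vᵀ)) := by
    simp only [Matrix.mul_assoc]
    rw [cancel, hEdsE]
  -- key cancellation : (1 - Q) Σ Q = 0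
  have hkey : (1 - Vhat * Vhatᵀ) * Sig * (Vhat * Vhatᵀ) = 0 := by
    rw [hQ]
    have hstep : (1 - V * E * Vᵀ) * Sig * (V * E * Vᵀ)
        = Sig * (V * (E * Vᵀ)) - V * (E * Vᵀ) * (Sig * (V * (E * Vᵀ))) := by
      simp only [Matrix.sub_mul, Matrix.one_mul, Matrix.mul_assoc]
    rw [hstep, hSQ, hQSQ, sub_self]
  have hPstarZero : Pstar * Sig * (Vhat * Vhatᵀ) = 0 := by
    rw [hPstar]
    calc M * (1 - Vhat * Vhatᵀ) * Sig * (Vhat * Vhatᵀ)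
        = M * ((1 - Vhat * Vhatᵀ) * Sig * (Vhat * Vhatᵀ)) := by
          simp only [Matrix.mul_assoc]
      _ = 0 := by rw [hkey, Matrix.mul_zero]
  refine ⟨hPstarZero, ?_⟩
  intro P hP
  -- decompose P - M = A + B  with A = P - Pstar, B = Pstar - M
  set A := P - Pstar with hA
  set B := Pstar - M with hB
  have hSigT : Sigᵀ = Sig := by
    rw [hSig]
    simp [hds, Matrix.transpose_mul, Matrix.diagonal_transpose, Matrix.mul_assoc]
  have hQT : (Vhat * Vhatᵀ)ᵀ = Vhat * Vhatᵀ := by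
    simp [Matrix.transpose_mul]
  have hAQ : A * Sig * (Vhat * Vhatᵀ) = 0 := by
    rw [hA, Matrix.sub_mul, Matrix.sub_mul, hP, hPstarZero, sub_zero]
  have hBval : B = -(M * (Vhat * Vhatᵀ)) := by
    rw [hB, hPstar, Matrix.mul_sub, Matrix.mul_one]
    abel
  have hcross1 : A * Sig * Bᵀ = 0 := by
    rw [hBval, Matrix.transpose_neg, Matrix.transpose_mul, hQT]
    rw [Matrix.mul_neg, ← Matrix.mul_assoc, hAQ, Matrix.zero_mul, neg_zero]
  have hcross2 : B * Sig * Aᵀ = 0 := by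
    have h : B * Sig * Aᵀ = (A * Sig * Bᵀ)ᵀ := by
      simp [Matrix.transpose_mul, hSigT, Matrix.mul_assoc]
    rw [h, hcross1, Matrix.transpose_zero]
  have hPM : P - M = A + B := by rw [hA, hB]; abel
  have hexp : (P - M) * Sig * (P - M)ᵀ
      = A * Sig * Aᵀ + B * Sig * Bᵀ := by
    rw [hPM, Matrix.transpose_add, Matrix.add_mul, Matrix.add_mul,
      Matrix.mul_add, Matrix.mul_add, hcross1, hcross2]
    abel
  rw [hexp, Matrix.trace_add]
  have hnn : 0 ≤ Matrix.trace (A * Sig * Aᵀ) := by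
    rw [hSig]
    exact trace_conj_diag_nonneg V s hs A
  linarith
end
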